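/- arXiv:1405.6381 — 4 statements merged into one kernel-verified Lean document; each statement's English description precedes it below -/
import Mathlib

section
/- Let c : C → X × X be a correspondence over a field k and let Z₁, Z₂ ⊆ X be closed subsets that are both locally c-invariant. Then the union Z₁ ∪ Z₂ is locally c-invariant. -/
open AlgebraicGeometry CategoryTheory CategoryTheory.Limits TopologicalSpace Opposite

universe u

/-- A closed subset `Z ⊆ X` is `c`-invariant for a correspondence `c = (c₁, c₂) : C ⟶ X × X`
if `c₁(c₂⁻¹(Z)) ⊆ Z` set-theoretically. -/
def CorrInvariant {C X : Scheme.{u}} (c₁ c₂ : C ⟶ X) (Z : Set X) : Prop :=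
  c₁.base '' (c₂.base ⁻¹' Z) ⊆ Z

/-- `Z ∩ U ⊆ U` is `c|_U`-invariant, where `c|_U : c₁⁻¹(U) ∩ c₂⁻¹(U) → U × U` denotes the
restriction of the correspondence `c = (c₁, c₂)` to an open subset `U ⊆ X`. -/
def CorrRestrictInvariant {C X : Scheme.{u}} (c₁ c₂ : C ⟶ X) (Z U : Set X) : Prop :=
  c₁.base '' ((c₁.base ⁻¹' U ∩ c₂.base ⁻¹' U) ∩ c₂.base ⁻¹' (Z ∩ U)) ⊆ Z ∩ U

/-- `Z` is locally `c`-invariant: every point of `Z` has an open neighbourhood `U ⊆ X` such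
that `Z ∩ U ⊆ U` is `c|_U`-invariant. -/
def CorrLocallyInvariant {C X : Scheme.{u}} (c₁ c₂ : C ⟶ X) (Z : Set X) : Prop :=
  ∀ x ∈ Z, ∃ U : Set X, IsOpen U ∧ x ∈ U ∧ CorrRestrictInvariant c₁ c₂ Z U

/-- `Z ∩ U₀ ⊆ U₀` is locally `c|_{U₀}`-invariant: every point of `Z ∩ U₀` has an open
neighbourhood `U ⊆ U₀` such that `(Z ∩ U₀) ∩ U ⊆ U` is `c|_U`-invariant (the opens of the
open subscheme `U₀` being exactly the opens of `X` contained in `U₀`). -/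
def CorrLocallyInvariantOn {C X : Scheme.{u}} (c₁ c₂ : C ⟶ X) (Z U₀ : Set X) : Prop :=
  ∀ x ∈ Z ∩ U₀, ∃ U : Set X, IsOpen U ∧ U ⊆ U₀ ∧ x ∈ U ∧
    CorrRestrictInvariant c₁ c₂ (Z ∩ U₀) U

/-- `F(c, Z) := c₂⁻¹(Z) ∩ c₁⁻¹(X ∖ Z) ⊆ C`. -/
def corrF {C X : Scheme.{u}} (c₁ c₂ : C ⟶ X) (Z : Set X) : Set C :=
  c₂.base ⁻¹' Z ∩ c₁.base ⁻¹' (Set.univ \ Z)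

/-- `G(c, Z) := ⋃_S cl(c₁(S)) ∩ cl(c₂(S)) ⊆ X`, the union over the irreducible components `S`
of `F(c, Z)` (i.e. the maximal irreducible subsets of `F(c, Z)`). -/
def corrG {C X : Scheme.{u}} (c₁ c₂ : C ⟶ X) (Z : Set X) : Set X :=
  ⋃ S ∈ {S : Set C | Maximal (fun T : Set C => T ⊆ corrF c₁ c₂ Z ∧ IsIrreducible T) S},
    closure (c₁.base '' S) ∩ closure (c₂.base '' S)


lemma corrRestrictInvariant_mono {C X : Scheme.{u}} (c₁ c₂ : C ⟶ X) {Z U U₁ : Set X}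
    (h : CorrRestrictInvariant c₁ c₂ Z U₁) (hUU : U ⊆ U₁) :
    CorrRestrictInvariant c₁ c₂ Z U := by
  rintro y ⟨t, ⟨⟨ht1, ht2⟩, ht3, ht4⟩, rfl⟩
  have := h ⟨t, ⟨⟨hUU ht1, hUU ht2⟩, ht3, hUU ht4⟩, rfl⟩
  exact ⟨this.1, ht1⟩

/-- **Remark 1.5(c).**  Let `c : C ⟶ X ×_k X` be a correspondence between schemes of finite
type over a field `k`, and let `Z₁, Z₂ ⊆ X` be closed subsets which are both locally
`c`-invariant.  Then `Z₁ ∪ Z₂` is locally `c`-invariant. -/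
theorem union_locally_invariant
    {k : Type u} [Field k]
    (X C : Scheme.{u}) (sX : X ⟶ Spec (CommRingCat.of k)) (sC : C ⟶ Spec (CommRingCat.of k))
    [LocallyOfFiniteType sX] [QuasiCompact sX] [LocallyOfFiniteType sC] [QuasiCompact sC]
    (c : C ⟶ pullback sX sX)
    (Z₁ Z₂ : Set X) (hZ₁ : IsClosed Z₁) (hZ₂ : IsClosed Z₂)
    (h₁ : CorrLocallyInvariant (c ≫ pullback.fst sX sX) (c ≫ pullback.snd sX sX) Z₁)
    (h₂ : CorrLocallyInvariant (c ≫ pullback.fst sX sX) (c ≫ pullback.snd sX sX) Z₂) :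
    CorrLocallyInvariant (c ≫ pullback.fst sX sX) (c ≫ pullback.snd sX sX) (Z₁ ∪ Z₂) := by
  intro x hx
  by_cases hx1 : x ∈ Z₁ <;> by_cases hx2 : x ∈ Z₂
  · obtain ⟨U₁, hU₁o, hxU₁, hinv₁⟩ := h₁ x hx1
    obtain ⟨U₂, hU₂o, hxU₂, hinv₂⟩ := h₂ x hx2
    refine ⟨U₁ ∩ U₂, hU₁o.inter hU₂o, ⟨hxU₁, hxU₂⟩, ?_⟩
    have i₁ := corrRestrictInvariant_mono _ _ hinv₁ (Set.inter_subset_left (t := U₂))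
    have i₂ := corrRestrictInvariant_mono _ _ hinv₂ (Set.inter_subset_right (s := U₁))
    rintro y ⟨t, ⟨⟨ht1, ht2⟩, ht3, ht4⟩, rfl⟩
    rcases ht3 with h3 | h3
    · have := i₁ ⟨t, ⟨⟨ht1, ht2⟩, h3, ht4⟩, rfl⟩
      exact ⟨Or.inl this.1, this.2⟩
    · have := i₂ ⟨t, ⟨⟨ht1, ht2⟩, h3, ht4⟩, rfl⟩
      exact ⟨Or.inr this.1, this.2⟩
  · obtain ⟨U₁, hU₁o, hxU₁, hinv₁⟩ := h₁ x hx1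
    refine ⟨U₁ \ Z₂, hU₁o.sdiff hZ₂, ⟨hxU₁, hx2⟩, ?_⟩
    have i₁ := corrRestrictInvariant_mono _ _ hinv₁ (Set.diff_subset (t := Z₂))
    rintro y ⟨t, ⟨⟨ht1, ht2⟩, ht3, ht4⟩, rfl⟩
    rcases ht3 with h3 | h3
    · have := i₁ ⟨t, ⟨⟨ht1, ht2⟩, h3, ht4⟩, rfl⟩
      exact ⟨Or.inl this.1, this.2⟩
    · exact absurd h3 ht4.2
  · obtain ⟨U₂, hU₂o, hxU₂, hinv₂⟩ := h₂ x (hx.resolve_left hx1)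
    refine ⟨U₂ \ Z₁, hU₂o.sdiff hZ₁, ⟨hxU₂, hx1⟩, ?_⟩
    have i₂ := corrRestrictInvariant_mono _ _ hinv₂ (Set.diff_subset (t := Z₁))
    rintro y ⟨t, ⟨⟨ht1, ht2⟩, ht3, ht4⟩, rfl⟩
    rcases ht3 with h3 | h3
    · exact absurd h3 ht4.2
    · have := i₂ ⟨t, ⟨⟨ht1, ht2⟩, h3, ht4⟩, rfl⟩
      exact ⟨Or.inr this.1, this.2⟩
  · exact absurd hx (by simp [hx1, hx2])
end

section
/- Let c : C → X × X be a correspondence over a field k and Z ⊆ X a closed subset. Then X ∖ G(c, Z) is the largest open subset U ⊆ X such that Z ∩ U ⊆ U is locally c|_U-invariant; that is, Z ∩ (X ∖ G(c,Z)) is locally c|_{X ∖ G(c,Z)}-invariant, and every open U ⊆ X for which Z ∩ U is locally c|_U-invariant is contained in X ∖ G(c, Z). -/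
open AlgebraicGeometry CategoryTheory CategoryTheory.Limits TopologicalSpace Opposite

universe u

/-! Near a point `x ∉ G(c, Z)`, each irreducible component `S` of `F(c, Z)` (there are
finitely many, as `C` is noetherian) stays away from `cl(c₁(S))` or from
`cl(c₂(S))`; on a neighbourhood doing this for all `S` at once, no `t ∈ F(c, Z)` has both
`c₁(t)` and `c₂(t)` in it, which is the required invariance. Conversely, if `y` lies in
`cl(c₁(S)) ∩ cl(c₂(S))`, then `y ∈ Z` as `Z` is closed, and irreducibility of `S` puts
`c₁(t)` and `c₂(t)` into any given neighbourhood of `y` for a single `t ∈ S`; since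
`c₂(t) ∈ Z` but `c₁(t) ∉ Z`, no neighbourhood of `y` is invariant. -/

open Topology

theorem Subtype.subset_image_val_iff {α : Type*} {F S : Set α} {u : Set F} (hS : S ⊆ F) :
    S ⊆ Subtype.val '' u ↔ Subtype.val ⁻¹' S ⊆ u :=
  ⟨fun h z hz ↦ by
    obtain ⟨w, hw, hwz⟩ := h hz
    exact Subtype.val_injective hwz ▸ hw,
  fun h x hx ↦ ⟨⟨x, hS hx⟩, h hx, rfl⟩⟩

section Topology

variable {X Y : Type*} [TopologicalSpace X] [TopologicalSpace Y]

theorem Topology.IsEmbedding.isIrreducible_image_iff {f : X → Y} (hf : IsEmbedding f)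
    {s : Set X} : IsIrreducible (f '' s) ↔ IsIrreducible s := by
  rw [isIrreducible_iff_irreducibleSpace, isIrreducible_iff_irreducibleSpace]
  exact (hf.homeomorphImage s).irreducibleSpace_iff.symm

theorem isIrreducible_preimage_val_iff {F T : Set X} (hT : T ⊆ F) :
    IsIrreducible (Subtype.val ⁻¹' T : Set F) ↔ IsIrreducible T := by
  rw [← IsEmbedding.subtypeVal.isIrreducible_image_iff, Subtype.image_preimage_coe,
    Set.inter_eq_right.2 hT]

theorem isIrreducible_image_val {F : Set X} {u : Set F} (hu : IsIrreducible u) :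
    IsIrreducible (Subtype.val '' u) :=
  hu.image _ continuous_subtype_val.continuousOn

theorem IsIrreducible.exists_maximal_isIrreducible_subset_superset {F T : Set X}
    (hT : IsIrreducible T) (hTF : T ⊆ F) :
    ∃ S, Maximal (fun S ↦ S ⊆ F ∧ IsIrreducible S) S ∧ T ⊆ S := by
  obtain ⟨u, hu, hTu⟩ := exists_mem_irreducibleComponents_subset_of_isIrreducible _
    ((isIrreducible_preimage_val_iff hTF).2 hT)
  refine ⟨Subtype.val '' u, ⟨⟨Subtype.coe_image_subset F u, isIrreducible_image_val hu.1⟩,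
    fun S ⟨hSF, hS⟩ huS ↦ ?_⟩, (Subtype.subset_image_val_iff hTF).2 hTu⟩
  exact (Subtype.subset_image_val_iff hSF).2
    (hu.2 ((isIrreducible_preimage_val_iff hSF).2 hS) (Set.image_subset_iff.1 huS))

theorem Maximal.preimage_val_mem_irreducibleComponents {F S : Set X}
    (hS : Maximal (fun S ↦ S ⊆ F ∧ IsIrreducible S) S) :
    Subtype.val ⁻¹' S ∈ irreducibleComponents F := by
  refine ⟨(isIrreducible_preimage_val_iff hS.1.1).2 hS.1.2, fun u hu hSu ↦ ?_⟩
  exact Set.image_subset_iff.1 (hS.2 ⟨Subtype.coe_image_subset F u, isIrreducible_image_val hu⟩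
    ((Subtype.subset_image_val_iff hS.1.1).2 hSu))

theorem TopologicalSpace.NoetherianSpace.finite_setOf_maximal_isIrreducible_subset
    [NoetherianSpace X] (F : Set X) :
    {S | Maximal (fun S ↦ S ⊆ F ∧ IsIrreducible S) S}.Finite := by
  refine ((NoetherianSpace.finite_irreducibleComponents (α := F)).image
    (Subtype.val '' ·)).subset fun S hS ↦ ⟨_, hS.preimage_val_mem_irreducibleComponents, ?_⟩
  change Subtype.val '' _ = S
  rw [Subtype.image_preimage_coe, Set.inter_eq_right.2 hS.1.1]

theorem exists_isOpen_forall_disjoint_or_disjoint {ι : Type*} {s : Set ι} (hs : s.Finite)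
    {A B : ι → Set X} (hA : ∀ i, IsClosed (A i)) (hB : ∀ i, IsClosed (B i)) {x : X}
    (hx : x ∉ ⋃ i ∈ s, A i ∩ B i) :
    ∃ U, IsOpen U ∧ x ∈ U ∧ ∀ i ∈ s, Disjoint U (A i) ∨ Disjoint U (B i) := by
  classical
  simp only [Set.mem_iUnion₂, not_exists] at hx
  let W i := if x ∈ A i then (B i)ᶜ else (A i)ᶜ
  have hW : ∀ i ∈ s, IsOpen (W i) ∧ x ∈ W i ∧
      (Disjoint (W i) (A i) ∨ Disjoint (W i) (B i)) := fun i hi ↦ by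
    by_cases h : x ∈ A i
    · simp only [W, if_pos h]
      exact ⟨(hB i).isOpen_compl, fun hB ↦ hx i hi ⟨h, hB⟩, .inr disjoint_compl_left⟩
    · simp only [W, if_neg h]
      exact ⟨(hA i).isOpen_compl, h, .inl disjoint_compl_left⟩
  refine ⟨⋂ i ∈ s, W i, hs.isOpen_biInter fun i hi ↦ (hW i hi).1,
    Set.mem_iInter₂.2 fun i hi ↦ (hW i hi).2.1, fun i hi ↦ ?_⟩
  exact (hW i hi).2.2.imp (.mono_left (Set.biInter_subset_of_mem hi))
    (.mono_left (Set.biInter_subset_of_mem hi))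

theorem IsPreirreducible.exists_mem_preimage_inter_of_mem_closure_image {Z : Type*}
    [TopologicalSpace Z] {S : Set Z} (hS : IsPreirreducible S) {f g : Z → X}
    (hf : Continuous f) (hg : Continuous g) {V : Set X} (hV : IsOpen V) {y : X} (hyV : y ∈ V)
    (hyf : y ∈ closure (f '' S)) (hyg : y ∈ closure (g '' S)) :
    ∃ t ∈ S, f t ∈ V ∧ g t ∈ V := by
  obtain ⟨_, hfV, t₁, ht₁, rfl⟩ := mem_closure_iff.1 hyf V hV hyV
  obtain ⟨_, hgV, t₂, ht₂, rfl⟩ := mem_closure_iff.1 hyg V hV hyV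
  exact hS _ _ (hV.preimage hf) (hV.preimage hg) ⟨t₁, ht₁, hfV⟩ ⟨t₂, ht₂, hgV⟩

end Topology

namespace AlgebraicGeometry

theorem IsNoetherian.of_locallyOfFiniteType_of_quasiCompact {X Y : Scheme.{u}} (f : X ⟶ Y)
    [LocallyOfFiniteType f] [QuasiCompact f] [IsNoetherian Y] : IsNoetherian X :=
  { LocallyOfFiniteType.isLocallyNoetherian f, QuasiCompact.compactSpace_of_compactSpace f with }

variable {C X : Scheme.{u}} (c₁ c₂ : C ⟶ X) {Z : Set X}

theorem mem_corrG_iff {y : X} : y ∈ corrG c₁ c₂ Z ↔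
    ∃ S, Maximal (fun S ↦ S ⊆ corrF c₁ c₂ Z ∧ IsIrreducible S) S ∧
      y ∈ closure (c₁.base '' S) ∧ y ∈ closure (c₂.base '' S) := by
  simp only [corrG, Set.mem_iUnion₂, Set.mem_inter_iff, exists_prop]
  rfl

theorem corrLocallyInvariantOn_compl_corrG [NoetherianSpace C] :
    CorrLocallyInvariantOn c₁ c₂ Z (Set.univ \ corrG c₁ c₂ Z) := by
  rintro x ⟨-, -, hx⟩
  obtain ⟨U, hU, hxU, hdisj⟩ := exists_isOpen_forall_disjoint_or_disjoint
    (NoetherianSpace.finite_setOf_maximal_isIrreducible_subset (corrF c₁ c₂ Z))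
    (fun _ ↦ isClosed_closure) (fun _ ↦ isClosed_closure) hx
  have hUG : U ⊆ Set.univ \ corrG c₁ c₂ Z := by
    refine fun y hy ↦ ⟨trivial, fun hyG ↦ ?_⟩
    obtain ⟨S, hS, hy₁, hy₂⟩ := (mem_corrG_iff c₁ c₂).1 hyG
    exact (hdisj S hS).elim (Set.disjoint_left.1 · hy hy₁) (Set.disjoint_left.1 · hy hy₂)
  refine ⟨U, hU, hUG, hxU, ?_⟩
  rintro _ ⟨t, ⟨⟨ht₁, ht₂⟩, ht₂Z, -⟩, rfl⟩
  refine ⟨⟨by_contra fun ht₁Z ↦ ?_, hUG ht₁⟩, ht₁⟩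
  have htF : t ∈ corrF c₁ c₂ Z := ⟨ht₂Z.1, trivial, ht₁Z⟩
  obtain ⟨S, hS, htS⟩ := isIrreducible_singleton.exists_maximal_isIrreducible_subset_superset
    (Set.singleton_subset_iff.2 htF)
  exact (hdisj S hS).elim
    (Set.disjoint_left.1 · ht₁ (subset_closure ⟨t, htS rfl, rfl⟩))
    (Set.disjoint_left.1 · ht₂ (subset_closure ⟨t, htS rfl, rfl⟩))

theorem subset_compl_corrG_of_corrLocallyInvariantOn (hZ : IsClosed Z) {U : Set X}
    (hU : CorrLocallyInvariantOn c₁ c₂ Z U) : U ⊆ Set.univ \ corrG c₁ c₂ Z := by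
  refine fun y hyU ↦ ⟨trivial, fun hyG ↦ ?_⟩
  obtain ⟨S, hS, hy₁, hy₂⟩ := (mem_corrG_iff c₁ c₂).1 hyG
  have hSF : S ⊆ corrF c₁ c₂ Z := hS.1.1
  have hyZ : y ∈ Z :=
    closure_minimal (Set.image_subset_iff.2 fun t ht ↦ (hSF ht).1) hZ hy₂
  obtain ⟨V, hV, hVU, hyV, hVinv⟩ := hU y ⟨hyZ, hyU⟩
  obtain ⟨t, htS, ht₁, ht₂⟩ :=
    hS.1.2.isPreirreducible.exists_mem_preimage_inter_of_mem_closure_image c₁.continuous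
      c₂.continuous hV hyV hy₁ hy₂
  exact (hSF htS).2.2 (hVinv ⟨t, ⟨⟨ht₁, ht₂⟩, ⟨(hSF htS).1, hVU ht₂⟩, ht₂⟩, rfl⟩).1.1

end AlgebraicGeometry

theorem complement_corrG_largest_locally_invariant_general
    {k : Type u} [Field k]
    (X C : Scheme.{u}) (sX : X ⟶ Spec (CommRingCat.of k)) (sC : C ⟶ Spec (CommRingCat.of k))
    [LocallyOfFiniteType sC] [QuasiCompact sC]
    (c : C ⟶ pullback sX sX)
    (Z : Set X) (hZ : IsClosed Z) :
    CorrLocallyInvariantOn (c ≫ pullback.fst sX sX) (c ≫ pullback.snd sX sX) Z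
        (Set.univ \ corrG (c ≫ pullback.fst sX sX) (c ≫ pullback.snd sX sX) Z) ∧
      ∀ U : Set X, IsOpen U →
        CorrLocallyInvariantOn (c ≫ pullback.fst sX sX) (c ≫ pullback.snd sX sX) Z U →
        U ⊆ Set.univ \ corrG (c ≫ pullback.fst sX sX) (c ≫ pullback.snd sX sX) Z := by
  have := IsNoetherian.of_locallyOfFiniteType_of_quasiCompact sC
  exact ⟨corrLocallyInvariantOn_compl_corrG _ _,
    fun _ _ ↦ subset_compl_corrG_of_corrLocallyInvariantOn _ _ hZ⟩

/-- **Lemma 1.6.**  Let `c : C ⟶ X ×_k X` be a correspondence between schemes of finite type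
over a field `k` and `Z ⊆ X` a closed subset.  Then `X ∖ G(c, Z)` is the largest open subset
`U ⊆ X` such that `Z ∩ U ⊆ U` is locally `c|_U`-invariant: `Z ∩ (X ∖ G(c, Z))` is locally
`c|_{X ∖ G(c,Z)}`-invariant, and every open `U ⊆ X` for which `Z ∩ U` is locally
`c|_U`-invariant is contained in `X ∖ G(c, Z)`. -/
theorem complement_corrG_largest_locally_invariant
    {k : Type u} [Field k]
    (X C : Scheme.{u}) (sX : X ⟶ Spec (CommRingCat.of k)) (sC : C ⟶ Spec (CommRingCat.of k))
    [LocallyOfFiniteType sX] [QuasiCompact sX] [LocallyOfFiniteType sC] [QuasiCompact sC]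
    (c : C ⟶ pullback sX sX)
    (Z : Set X) (hZ : IsClosed Z) :
    CorrLocallyInvariantOn (c ≫ pullback.fst sX sX) (c ≫ pullback.snd sX sX) Z
        (Set.univ \ corrG (c ≫ pullback.fst sX sX) (c ≫ pullback.snd sX sX) Z) ∧
      ∀ U : Set X, IsOpen U →
        CorrLocallyInvariantOn (c ≫ pullback.fst sX sX) (c ≫ pullback.snd sX sX) Z U →
        U ⊆ Set.univ \ corrG (c ≫ pullback.fst sX sX) (c ≫ pullback.snd sX sX) Z :=
  complement_corrG_largest_locally_invariant_general X C sX sC c Z hZ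
end

section
/- Let c : C → X × X be a correspondence over a field k. A closed subset Z ⊆ X is locally c-invariant if and only if G(c, Z) = ∅. -/
/-!
If `x ∈ cl(c₁(S)) ∩ cl(c₂(S))` for an irreducible component `S` of `F(c, Z)`, then `x ∈ Z`, and
for every open `U ∋ x` the nonempty opens `S ∩ c₁⁻¹(U)` and `S ∩ c₂⁻¹(U)` of `S` meet. A point of
the intersection lies in `F(c, Z)` over `U × U`, which is exactly what `c|_U`-invariance of `Z ∩ U`
forbids. Conversely, `C` is a Noetherian space, so `F(c, Z)` is covered by finitely many of its
irreducible components `S`. If `G(c, Z) = ∅`, each `S` admits a neighbourhood of `x` missing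
`c₁(S)` or one missing `c₂(S)`, and the intersection `U` of these neighbourhoods has no point of
`F(c, Z)` over `U × U`.
-/

open AlgebraicGeometry CategoryTheory CategoryTheory.Limits TopologicalSpace Opposite

universe u

section Topology

open Set Filter Topology

variable {α β : Type*} [TopologicalSpace α] [TopologicalSpace β]

theorem IsChain.isPreirreducible_sUnion {c : Set (Set α)} (hchain : IsChain (· ⊆ ·) c)
    (hc : ∀ s ∈ c, IsPreirreducible s) : IsPreirreducible (⋃₀ c) := by
  rintro u v hu hv ⟨y, hy, hyu⟩ ⟨z, hz, hzv⟩
  obtain ⟨s, hsc, hys⟩ := mem_sUnion.1 hy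
  obtain ⟨t, htc, hzt⟩ := mem_sUnion.1 hz
  rcases hchain.total hsc htc with hst | hts
  · obtain ⟨w, hwt, hw⟩ := hc t htc u v hu hv ⟨y, hst hys, hyu⟩ ⟨z, hzt, hzv⟩
    exact ⟨w, mem_sUnion_of_mem hwt htc, hw⟩
  · obtain ⟨w, hws, hw⟩ := hc s hsc u v hu hv ⟨y, hys, hyu⟩ ⟨z, hts hzt, hzv⟩
    exact ⟨w, mem_sUnion_of_mem hws hsc, hw⟩

theorem IsIrreducible.exists_maximal_isIrreducible_subset {F A : Set α} (hA : IsIrreducible A)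
    (hAF : A ⊆ F) : ∃ S, A ⊆ S ∧ Maximal (fun T ↦ T ⊆ F ∧ IsIrreducible T) S := by
  obtain ⟨S, hAS, hS⟩ := zorn_subset_nonempty {T | T ⊆ F ∧ IsPreirreducible T}
    (fun c hcF hchain _ ↦ ⟨⋃₀ c, ⟨sUnion_subset fun s hs ↦ (hcF hs).1,
      hchain.isPreirreducible_sUnion fun s hs ↦ (hcF hs).2⟩, fun _ ↦ subset_sUnion_of_mem⟩)
    A ⟨hAF, hA.2⟩
  exact ⟨S, hAS, ⟨hS.prop.1, hA.1.mono hAS, hS.prop.2⟩, fun T hT hST ↦ hS.2 ⟨hT.1, hT.2.2⟩ hST⟩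

theorem TopologicalSpace.NoetherianSpace.exists_finite_isIrreducible_cover [NoetherianSpace α]
    (F : Set α) : ∃ 𝒜 : Set (Set α), 𝒜.Finite ∧ (∀ A ∈ 𝒜, A ⊆ F ∧ IsIrreducible A) ∧ F ⊆ ⋃₀ 𝒜 := by
  refine ⟨image Subtype.val '' irreducibleComponents F,
    NoetherianSpace.finite_irreducibleComponents.image _, ?_, fun p hp ↦ ?_⟩
  · rintro _ ⟨A, hA, rfl⟩
    exact ⟨Subtype.coe_image_subset F A, hA.1.image _ continuous_subtype_val.continuousOn⟩
  · exact ⟨_, ⟨_, irreducibleComponent_mem_irreducibleComponents ⟨p, hp⟩, rfl⟩,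
      ⟨p, hp⟩, mem_irreducibleComponent, rfl⟩

theorem TopologicalSpace.NoetherianSpace.exists_finite_maximal_isIrreducible_cover
    [NoetherianSpace α] (F : Set α) : ∃ 𝒮 : Set (Set α), 𝒮.Finite ∧
      (∀ S ∈ 𝒮, Maximal (fun T ↦ T ⊆ F ∧ IsIrreducible T) S) ∧ F ⊆ ⋃₀ 𝒮 := by
  obtain ⟨𝒜, h𝒜, hirr, hcover⟩ := exists_finite_isIrreducible_cover F
  choose! S hAS hS using fun A (hA : A ∈ 𝒜) ↦
    (hirr A hA).2.exists_maximal_isIrreducible_subset (hirr A hA).1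
  refine ⟨S '' 𝒜, h𝒜.image S, forall_mem_image.2 hS, hcover.trans ?_⟩
  exact sUnion_subset fun A hA ↦ (hAS A hA).trans (subset_sUnion_of_mem (mem_image_of_mem S hA))

theorem IsPreirreducible.inter_preimage_inter_preimage_nonempty {S : Set α}
    (hS : IsPreirreducible S) {f g : α → β} (hf : Continuous f) (hg : Continuous g) {x : β}
    (hx : x ∈ closure (f '' S) ∩ closure (g '' S)) {U : Set β} (hU : IsOpen U) (hxU : x ∈ U) :
    (S ∩ (f ⁻¹' U ∩ g ⁻¹' U)).Nonempty := by
  obtain ⟨_, hfU, p, hpS, rfl⟩ := mem_closure_iff.1 hx.1 U hU hxU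
  obtain ⟨_, hgU, q, hqS, rfl⟩ := mem_closure_iff.1 hx.2 U hU hxU
  exact hS _ _ (hU.preimage hf) (hU.preimage hg) ⟨p, hpS, hfU⟩ ⟨q, hqS, hgU⟩

theorem eventually_smallSets_disjoint_preimage_inter_preimage {γ : Type*} {f g : γ → β}
    {S : Set γ} {x : β} (hx : x ∉ closure (f '' S) ∩ closure (g '' S)) :
    ∀ᶠ V in (𝓝 x).smallSets, Disjoint S (f ⁻¹' V ∩ g ⁻¹' V) := by
  rw [eventually_smallSets' fun V W hVW hW ↦ hW.mono_right
    (inter_subset_inter (preimage_mono hVW) (preimage_mono hVW))]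
  rcases not_and_or.1 hx with hxf | hxg
  · refine ⟨_, isClosed_closure.isOpen_compl.mem_nhds hxf, disjoint_left.2 fun p hp hpV ↦ ?_⟩
    exact hpV.1 (subset_closure (mem_image_of_mem f hp))
  · refine ⟨_, isClosed_closure.isOpen_compl.mem_nhds hxg, disjoint_left.2 fun p hp hpV ↦ ?_⟩
    exact hpV.2 (subset_closure (mem_image_of_mem g hp))

theorem exists_isOpen_disjoint_preimage_inter_preimage_of_finite_cover {γ : Type*}
    {f g : γ → β} {F : Set γ} {𝒮 : Set (Set γ)} (h𝒮 : 𝒮.Finite) (hF : F ⊆ ⋃₀ 𝒮) {x : β}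
    (hx : ∀ S ∈ 𝒮, x ∉ closure (f '' S) ∩ closure (g '' S)) :
    ∃ U, IsOpen U ∧ x ∈ U ∧ Disjoint F (f ⁻¹' U ∩ g ⁻¹' U) := by
  have hev : ∀ᶠ V in (𝓝 x).smallSets, ∀ S ∈ 𝒮, Disjoint S (f ⁻¹' V ∩ g ⁻¹' V) :=
    (eventually_all_finite h𝒮).2 fun S hS ↦ eventually_smallSets_disjoint_preimage_inter_preimage
      (hx S hS)
  obtain ⟨V, hV, hVdisj⟩ := eventually_smallSets.1 hev
  obtain ⟨U, hUV, hU, hxU⟩ := mem_nhds_iff.1 hV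
  exact ⟨U, hU, hxU, (disjoint_sUnion_left.2 (hVdisj U hUV)).mono_left hF⟩

end Topology

theorem AlgebraicGeometry.LocallyOfFiniteType.isNoetherian {X Y : Scheme.{u}} [IsNoetherian Y]
    (f : X ⟶ Y) [LocallyOfFiniteType f] [QuasiCompact f] : IsNoetherian X :=
  have := LocallyOfFiniteType.isLocallyNoetherian f
  have := QuasiCompact.compactSpace_of_compactSpace f
  ⟨⟩

section Correspondence

open Set

variable {C X : Scheme.{u}} {c₁ c₂ : C ⟶ X} {Z : Set X}

theorem corrRestrictInvariant_iff_disjoint {U : Set X} :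
    CorrRestrictInvariant c₁ c₂ Z U ↔
      Disjoint (corrF c₁ c₂ Z) (c₁.base ⁻¹' U ∩ c₂.base ⁻¹' U) := by
  rw [CorrRestrictInvariant, corrF, image_subset_iff, disjoint_left]
  simp only [subset_def, mem_inter_iff, mem_preimage, mem_sdiff, mem_univ, true_and]
  exact forall_congr' fun p ↦ by tauto

theorem corrG_eq_empty_of_corrLocallyInvariant (hZ : IsClosed Z)
    (h : CorrLocallyInvariant c₁ c₂ Z) : corrG c₁ c₂ Z = ∅ := by
  refine eq_empty_iff_forall_notMem.2 fun x hx ↦ ?_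
  obtain ⟨S, hS, hxS⟩ := mem_iUnion₂.1 hx
  have hSF : S ⊆ corrF c₁ c₂ Z := hS.1.1
  have hxZ : x ∈ Z := hZ.closure_subset_iff.2 (image_subset_iff.2 fun p hp ↦ (hSF hp).1) hxS.2
  obtain ⟨U, hU, hxU, hinv⟩ := h x hxZ
  obtain ⟨p, hpS, hpU⟩ := hS.1.2.2.inter_preimage_inter_preimage_nonempty
    c₁.continuous c₂.continuous hxS hU hxU
  exact corrRestrictInvariant_iff_disjoint.1 hinv |>.ne_of_mem (hSF hpS) hpU rfl

theorem corrLocallyInvariant_of_corrG_eq_empty [NoetherianSpace C] (h : corrG c₁ c₂ Z = ∅) :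
    CorrLocallyInvariant c₁ c₂ Z := by
  intro x _
  obtain ⟨𝒮, h𝒮, hmax, hcover⟩ :=
    NoetherianSpace.exists_finite_maximal_isIrreducible_cover (corrF c₁ c₂ Z)
  obtain ⟨U, hU, hxU, hdisj⟩ := exists_isOpen_disjoint_preimage_inter_preimage_of_finite_cover
    h𝒮 hcover fun S hS hxS ↦ (h ▸ mem_iUnion₂_of_mem (hmax S hS) hxS : x ∈ (∅ : Set X))
  exact ⟨U, hU, hxU, corrRestrictInvariant_iff_disjoint.2 hdisj⟩

end Correspondence

theorem locally_invariant_iff_corrG_empty_general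
    {k : Type u} [Field k]
    (X C : Scheme.{u}) (sX : X ⟶ Spec (CommRingCat.of k)) (sC : C ⟶ Spec (CommRingCat.of k))
    [LocallyOfFiniteType sC] [QuasiCompact sC]
    (c : C ⟶ pullback sX sX)
    (Z : Set X) (hZ : IsClosed Z) :
    CorrLocallyInvariant (c ≫ pullback.fst sX sX) (c ≫ pullback.snd sX sX) Z ↔
      corrG (c ≫ pullback.fst sX sX) (c ≫ pullback.snd sX sX) Z = ∅ := by
  have : IsNoetherian C := LocallyOfFiniteType.isNoetherian sC
  exact ⟨corrG_eq_empty_of_corrLocallyInvariant hZ, corrLocallyInvariant_of_corrG_eq_empty⟩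

/-- **Corollary 1.7(a).**  Let `c : C ⟶ X ×_k X` be a correspondence between schemes of
finite type over a field `k`.  A closed subset `Z ⊆ X` is locally `c`-invariant if and only if
`G(c, Z) = ∅`. -/
theorem locally_invariant_iff_corrG_empty
    {k : Type u} [Field k]
    (X C : Scheme.{u}) (sX : X ⟶ Spec (CommRingCat.of k)) (sC : C ⟶ Spec (CommRingCat.of k))
    [LocallyOfFiniteType sX] [QuasiCompact sX] [LocallyOfFiniteType sC] [QuasiCompact sC]
    (c : C ⟶ pullback sX sX)
    (Z : Set X) (hZ : IsClosed Z) :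
    CorrLocallyInvariant (c ≫ pullback.fst sX sX) (c ≫ pullback.snd sX sX) Z ↔
      corrG (c ≫ pullback.fst sX sX) (c ≫ pullback.snd sX sX) Z = ∅ :=
  locally_invariant_iff_corrG_empty_general X C sX sC c Z hZ
end

section
/- Let F be an algebraic closure of 𝔽_q, let c : C → X × X be a correspondence over F with X defined over 𝔽_q, and let Z ⊆ X be a closed subset. Let n ∈ ℕ be such that q^n > ram(c₂, Z) and Z is c^(n)-invariant. Then the correspondence c^(n) is contracting near Z. -/
/-!
The geometric Frobenius `φ_q` of `X = X₀ ×_{𝔽_q} F` is the absolute `q`-Frobenius of `X`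
followed by the automorphism `id × Spec σ⁻¹` (`σ` the arithmetic Frobenius of `F`), so pulling
back along `φ_{q^n}` turns every section into a `q^n`-th power and `φ_{q^n}^· I_Z` lands in
`(I_{φ_{q^n}⁻¹ Z})^{q^n}`. Invariance of `Z` gives `c₂⁻¹(Z) ⊆ (φ_{q^n} ∘ c₁)⁻¹(Z)`, and since `Z`
is closed, `I_{c₂⁻¹ Z} ⊆ √(c₂^· I_Z)`; hence `(c^(n))₁^· I_Z ⊆ √(c₂^· I_Z)^{q^n}`. As `C` is
Noetherian, `m = ram(c₂, Z)` is attained, `√(c₂^· I_Z)^m ⊆ c₂^· I_Z`, and `m < q^n` yields both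
containments, the second with exponent `m`.
-/

open AlgebraicGeometry CategoryTheory CategoryTheory.Limits TopologicalSpace Opposite

universe u

/-- `f : X ⟶ X` is the `q`-power Frobenius endomorphism of the scheme `X`: the identity on
the underlying topological space and the `q`-th power map on the structure sheaf. -/
def IsSchemeFrobenius (q : ℕ) {X : Scheme.{u}} (f : X ⟶ X) : Prop :=
  ∃ hb : ∀ x, f.base x = x,
    ∀ (U : X.Opens) (s : Γ(X, U)),
      f.appLE U U (fun x hx => show f.base x ∈ U by rw [hb x]; exact hx) s = s ^ q

/-- The `n`-th iterate of an endomorphism of a scheme. -/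
def iterateHom {X : Scheme.{u}} (f : X ⟶ X) : ℕ → (X ⟶ X)
  | 0 => 𝟙 X
  | n + 1 => f ≫ iterateHom f n

/-- The morphism `Spec F ⟶ Spec 𝔽_q` induced by the algebra structure. -/
noncomputable abbrev specOfAlgebra (Fq F : Type u) [Field Fq] [Field F] [Algebra Fq F] :
    Spec (CommRingCat.of F) ⟶ Spec (CommRingCat.of Fq) :=
  Spec.map (CommRingCat.ofHom (algebraMap Fq F))

/-- Base change of an endomorphism `fr : X₀ ⟶ X₀` over `S` along `g : T ⟶ S`.  Applied to the
`q`-power Frobenius of the `𝔽_q`-model `X₀`, this is the geometric Frobenius `φ_q` of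
`X = X₀ ×_{Spec 𝔽_q} Spec F`. -/
noncomputable def baseChangeEnd {X₀ S T : Scheme.{u}} (sX₀ : X₀ ⟶ S) (g : T ⟶ S)
    (fr : X₀ ⟶ X₀) (hcomm : fr ≫ sX₀ = sX₀) :
    pullback sX₀ g ⟶ pullback sX₀ g :=
  pullback.map sX₀ g sX₀ g fr (𝟙 T) (𝟙 S) (by rw [hcomm, Category.comp_id]) (by simp)

/-- The stalk at `x` of the ideal sheaf `I_Z ⊆ O_X` of a closed subset `Z ⊆ X` (with its
reduced structure): germs of sections vanishing (i.e. with non-unit germ, equivalently germ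
in the maximal ideal) at every point of `Z` in some neighbourhood of `x`. -/
noncomputable def stalkVanishingIdeal (X : Scheme.{u}) (Z : Set X) (x : X) :
    Ideal (X.presheaf.stalk x) :=
  Ideal.span {g | ∃ (U : X.Opens) (hx : x ∈ U) (s : Γ(X, U)),
    X.presheaf.germ U x hx s = g ∧
    ∀ z (hz : z ∈ U), z ∈ Z → ¬ IsUnit (X.presheaf.germ U z hz s)}

/-- The stalk at `y` of the inverse-image ideal sheaf `f^·(I_Z)·O_C` (the ideal sheaf of the
schematic preimage `f⁻¹(Z)`): the ideal generated by the image of the stalk of `I_Z` under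
the map on stalks. -/
noncomputable def pullbackStalkIdeal {C X : Scheme.{u}} (f : C ⟶ X) (Z : Set X) (y : C) :
    Ideal (C.presheaf.stalk y) :=
  Ideal.map (f.stalkMap y).hom (stalkVanishingIdeal X Z (f.base y))

/-- `ram(f, Z)`: the smallest positive integer `m` such that `√I_{f⁻¹(Z)}^m ⊆ I_{f⁻¹(Z)}`,
where `I_{f⁻¹(Z)}` is the ideal sheaf of the schematic preimage of `Z` (a containment of
ideal sheaves holds iff it holds on all stalks). -/
noncomputable def ramDeg {C X : Scheme.{u}} (f : C ⟶ X) (Z : Set X) : ℕ :=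
  sInf {m | 0 < m ∧ ∀ y : C, (pullbackStalkIdeal f Z y).radical ^ m ≤ pullbackStalkIdeal f Z y}

/-- The correspondence `c = (c₁, c₂)` is contracting near `Z`:
`c₁^·(I_Z)·O_C ⊆ c₂^·(I_Z)·O_C`, and `(c₁^·(I_Z)·O_C)^n ⊆ (c₂^·(I_Z)·O_C)^{n+1}` for some
`n > 0` (containments of ideal sheaves, checked on stalks). -/
def ContractingNear {C X : Scheme.{u}} (c₁ c₂ : C ⟶ X) (Z : Set X) : Prop :=
  (∀ y : C, pullbackStalkIdeal c₁ Z y ≤ pullbackStalkIdeal c₂ Z y) ∧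
  ∃ n : ℕ, 0 < n ∧ ∀ y : C,
    pullbackStalkIdeal c₁ Z y ^ n ≤ pullbackStalkIdeal c₂ Z y ^ (n + 1)

namespace Ideal

lemma radical_map_pow_le_of_isLocalization {R S : Type*} [CommRing R] [CommRing S]
    [Algebra R S] (M : Submonoid R) [IsLocalization M S] {K : Ideal R} {m : ℕ}
    (h : K.radical ^ m ≤ K) :
    (K.map (algebraMap R S)).radical ^ m ≤ K.map (algebraMap R S) := by
  rw [← IsLocalization.map_radical M, ← Ideal.map_pow]
  exact map_mono h

variable {R : Type*} [CommSemiring R] {I J : Ideal R} {m Q : ℕ}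

lemma le_of_le_radical_pow (hJ : J.radical ^ m ≤ J) (hmQ : m ≤ Q) (hI : I ≤ J.radical ^ Q) :
    I ≤ J :=
  hI.trans ((pow_le_pow_right hmQ).trans hJ)

lemma pow_le_pow_succ_of_le_radical_pow (hJ : J.radical ^ m ≤ J) (hmQ : m < Q)
    (hI : I ≤ J.radical ^ Q) : I ^ m ≤ J ^ (m + 1) :=
  calc I ^ m ≤ J.radical ^ (Q * m) := by
        rw [pow_mul]
        exact pow_right_mono hI m
    _ ≤ J.radical ^ (m * (m + 1)) := pow_le_pow_right (by rw [mul_comm]; gcongr; omega)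
    _ ≤ J ^ (m + 1) := by
        rw [pow_mul]
        exact pow_right_mono hJ _

end Ideal

open Filter Topology in
lemma CompactSpace.eventually_forall_of_forall_eventually_prod {α Y : Type*} [TopologicalSpace Y]
    [CompactSpace Y] {l : Filter α} {P : α → Y → Prop}
    (h : ∀ y, ∀ᶠ p : α × Y in l ×ˢ 𝓝 y, P p.1 p.2) : ∀ᶠ a in l, ∀ y, P a y := by
  have := isCompact_univ.mem_prod_nhdsSet_of_forall fun y (_ : y ∈ Set.univ) => h y
  rw [nhdsSet_univ] at this
  exact mem_prod_top.mp this

lemma AlgebraicGeometry.Scheme.Hom.stalkMap_germ_eq_germ_appLE {C X : Scheme.{u}} (f : C ⟶ X)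
    {U : X.Opens} {V : C.Opens} (e : V ≤ f ⁻¹ᵁ U) {y : C} (hy : y ∈ V) (s : Γ(X, U)) :
    f.stalkMap y (X.presheaf.germ U (f.base y) (e hy) s) =
      C.presheaf.germ V y hy (f.appLE U V e s) := by
  rw [Scheme.Hom.appLE, CommRingCat.comp_apply, TopCat.Presheaf.germ_res_apply]
  exact f.germ_stalkMap_apply U y (e hy) s

lemma AlgebraicGeometry.Scheme.Hom.exists_isAffineOpen_le_preimage {C X : Scheme.{u}}
    (f : C ⟶ X) (y : C) :
    ∃ (U : X.Opens) (V : C.Opens), IsAffineOpen U ∧ IsAffineOpen V ∧ V ≤ f ⁻¹ᵁ U ∧ y ∈ V := by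
  obtain ⟨U, hU, hyU, -⟩ := exists_isAffineOpen_mem_and_subset (U := ⊤) (x := f.base y) trivial
  obtain ⟨V, hV, hyV, hVU⟩ := exists_isAffineOpen_mem_and_subset (U := f ⁻¹ᵁ U) hyU
  exact ⟨U, V, hU, hV, hVU, hyV⟩

lemma AlgebraicGeometry.Scheme.Hom.ext_of_appLE {X Y : Scheme.{u}} {f g : X ⟶ Y}
    (h_base : f.base = g.base)
    (h_app : ∀ (U : Y.Opens) (V : X.Opens) (e : V ≤ f ⁻¹ᵁ U) (e' : V ≤ g ⁻¹ᵁ U) (s : Γ(Y, U)),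
      f.appLE U V e s = g.appLE U V e' s) : f = g := by
  refine Scheme.Hom.ext h_base fun U => ?_
  ext s
  have e : g ⁻¹ᵁ U ≤ f ⁻¹ᵁ U := fun x hx => by
    rwa [Scheme.Hom.mem_preimage, h_base]
  exact (h_app U _ e le_rfl s).trans (by rw [Scheme.Hom.app_eq_appLE])

def sectionsVanishingOn (X : Scheme.{u}) (U : X.Opens) (Z : Set X) : Ideal Γ(X, U) where
  carrier := {a | Disjoint (X.basicOpen a : Set X) Z}
  zero_mem' := by simp
  add_mem' {a b} ha hb := by
    have hab : (X.basicOpen (a + b) : Set X) ⊆ X.basicOpen a ∪ X.basicOpen b :=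
      X.basicOpen_add_le a b
    exact Set.disjoint_of_subset_left hab (Disjoint.union_left ha hb)
  smul_mem' c a ha := by
    simp only [Set.mem_ofPred_eq, smul_eq_mul, Scheme.basicOpen_mul, Opens.coe_inf] at ha ⊢
    exact ha.inter_left' _

section VanishingIdeal

variable {X : Scheme.{u}} {Z : Set X}

lemma mem_sectionsVanishingOn_iff {U : X.Opens} {a : Γ(X, U)} :
    a ∈ sectionsVanishingOn X U Z ↔ Disjoint (X.basicOpen a : Set X) Z :=
  Iff.rfl

lemma mem_sectionsVanishingOn_iff_forall_not_isUnit {U : X.Opens} {a : Γ(X, U)} :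
    a ∈ sectionsVanishingOn X U Z ↔
      ∀ z (hz : z ∈ U), z ∈ Z → ¬ IsUnit (X.presheaf.germ U z hz a) := by
  simp only [mem_sectionsVanishingOn_iff, Set.disjoint_left, SetLike.mem_coe,
    Scheme.mem_basicOpen'']
  grind

lemma germ_mem_stalkVanishingIdeal {U : X.Opens} {x : X} (hx : x ∈ U) {a : Γ(X, U)}
    (ha : a ∈ sectionsVanishingOn X U Z) :
    X.presheaf.germ U x hx a ∈ stalkVanishingIdeal X Z x :=
  Ideal.subset_span ⟨U, hx, a, rfl, mem_sectionsVanishingOn_iff_forall_not_isUnit.mp ha⟩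

lemma stalkVanishingIdeal_le_iff {x : X} {J : Ideal (X.presheaf.stalk x)} :
    stalkVanishingIdeal X Z x ≤ J ↔ ∀ (U : X.Opens) (hx : x ∈ U),
      ∀ a ∈ sectionsVanishingOn X U Z, X.presheaf.germ U x hx a ∈ J := by
  refine ⟨fun h U hx a ha => h (germ_mem_stalkVanishingIdeal hx ha), fun h => ?_⟩
  refine Ideal.span_le.mpr ?_
  rintro _ ⟨U, hx, a, rfl, ha⟩
  exact h U hx a (mem_sectionsVanishingOn_iff_forall_not_isUnit.mpr ha)

lemma stalkVanishingIdeal_antitone {Z' : Set X} (h : Z ⊆ Z') (x : X) :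
    stalkVanishingIdeal X Z' x ≤ stalkVanishingIdeal X Z x :=
  stalkVanishingIdeal_le_iff.mpr fun _ hx _ ha =>
    germ_mem_stalkVanishingIdeal hx (Disjoint.mono_right h ha)

lemma AlgebraicGeometry.IsAffineOpen.exists_germ_mul_pow_eq {U V : X.Opens} (hU : IsAffineOpen U)
    {x : X} (hxU : x ∈ U) (hxV : x ∈ V) (s : Γ(X, V)) :
    ∃ (f a : Γ(X, U)) (k : ℕ) (hfV : X.basicOpen f ≤ V), x ∈ X.basicOpen f ∧
      ∀ z (hz : z ∈ X.basicOpen f), X.presheaf.germ V z (hfV hz) s *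
        X.presheaf.germ U z (X.basicOpen_le f hz) f ^ k =
          X.presheaf.germ U z (X.basicOpen_le f hz) a := by
  obtain ⟨f, hfV, hxf⟩ := hU.exists_basicOpen_le ⟨x, hxV⟩ hxU
  have := hU.isLocalization_basicOpen f
  obtain ⟨k, a, hk⟩ := IsLocalization.Away.surj f (X.presheaf.map (homOfLE hfV).op s)
  refine ⟨f, a, k, hfV, hxf, fun z hz => ?_⟩
  simpa [RingHom.algebraMap_toAlgebra] using congr_arg (X.presheaf.germ (X.basicOpen f) z hz) hk

lemma stalkVanishingIdeal_eq_map_germ {U : X.Opens} (hU : IsAffineOpen U) {x : X} (hx : x ∈ U) :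
    stalkVanishingIdeal X Z x = (sectionsVanishingOn X U Z).map (X.presheaf.germ U x hx).hom := by
  refine le_antisymm (stalkVanishingIdeal_le_iff.mpr fun V hxV s hs => ?_)
    (Ideal.map_le_iff_le_comap.mpr fun a ha => germ_mem_stalkVanishingIdeal hx ha)
  obtain ⟨f, a, k, hfV, hxf, hfrac⟩ := hU.exists_germ_mul_pow_eq hx hxV s
  have hf : IsUnit (X.presheaf.germ U x hx f) := (X.mem_basicOpen f x hx).mp hxf
  have haf : a * f ∈ sectionsVanishingOn X U Z := by
    refine mem_sectionsVanishingOn_iff_forall_not_isUnit.mpr fun z hz hzZ hunit => ?_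
    rw [map_mul, IsUnit.mul_iff] at hunit
    have hzf : z ∈ X.basicOpen f := (X.mem_basicOpen f z hz).mpr hunit.2
    rw [← hfrac z hzf, IsUnit.mul_iff] at hunit
    exact mem_sectionsVanishingOn_iff_forall_not_isUnit.mp hs z (hfV hzf) hzZ hunit.1.1
  have hgerm : X.presheaf.germ V x hxV s =
      X.presheaf.germ U x hx (a * f) * ↑(hf.unit ^ (k + 1))⁻¹ := by
    rw [Units.eq_mul_inv_iff_mul_eq, map_mul, ← hfrac x hxf]
    simp [pow_succ, mul_assoc]
  rw [hgerm]
  exact Ideal.mul_mem_right _ _ (Ideal.mem_map_of_mem _ haf)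

end VanishingIdeal

section Pullback

variable {C X : Scheme.{u}} {Z : Set X}

lemma pullbackStalkIdeal_eq_map_germ_appLE (f : C ⟶ X) {U : X.Opens} (hU : IsAffineOpen U)
    {V : C.Opens} (e : V ≤ f ⁻¹ᵁ U) {y : C} (hy : y ∈ V) :
    pullbackStalkIdeal f Z y =
      ((sectionsVanishingOn X U Z).map (f.appLE U V e).hom).map (C.presheaf.germ V y hy).hom := by
  rw [pullbackStalkIdeal, stalkVanishingIdeal_eq_map_germ hU (e hy), Ideal.map_map, Ideal.map_map]
  congr 1
  ext s
  exact f.stalkMap_germ_eq_germ_appLE e hy s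

lemma AlgebraicGeometry.IsAffineOpen.exists_mem_sectionsVanishingOn {U : X.Opens}
    (hU : IsAffineOpen U) (hZ : IsClosed Z) {x : X} (hxU : x ∈ U) (hxZ : x ∉ Z) :
    ∃ a ∈ sectionsVanishingOn X U Z, x ∈ X.basicOpen a := by
  obtain ⟨a, haZ, hxa⟩ := hU.exists_basicOpen_le (V := ⟨Zᶜ, hZ.isOpen_compl⟩) ⟨x, hxZ⟩ hxU
  exact ⟨a, Set.subset_compl_iff_disjoint_right.mp haZ, hxa⟩

/-- A prime containing the right-hand ideal is a point mapping into `Z`, as `Z` is closed. -/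
lemma sectionsVanishingOn_preimage_le_radical (f : C ⟶ X) (hZ : IsClosed Z) {U : X.Opens}
    (hU : IsAffineOpen U) {V : C.Opens} (hV : IsAffineOpen V) (e : V ≤ f ⁻¹ᵁ U) :
    sectionsVanishingOn C V (f.base ⁻¹' Z) ≤
      ((sectionsVanishingOn X U Z).map (f.appLE U V e).hom).radical := by
  intro t ht
  rw [Ideal.radical_eq_sInf, Ideal.mem_sInf]
  rintro P ⟨hP, hPprime⟩
  set w := hV.fromSpec.base ⟨P, hPprime⟩
  have hwV : w ∈ V := hV.range_fromSpec.le (Set.mem_range_self _)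
  have mem_basicOpen_iff (b : Γ(C, V)) : w ∈ C.basicOpen b ↔ b ∉ P := by
    change _ ∈ hV.fromSpec ⁻¹ᵁ C.basicOpen b ↔ _
    rw [hV.fromSpec_preimage_basicOpen]
    exact PrimeSpectrum.mem_basicOpen _ _
  have hwZ : f.base w ∈ Z := by
    by_contra hwZ
    obtain ⟨a, ha, hwa⟩ := hU.exists_mem_sectionsVanishingOn hZ (e hwV) hwZ
    have : w ∈ C.basicOpen (f.appLE U V e a) := by
      rw [Scheme.basicOpen_appLE]
      exact ⟨hwV, hwa⟩
    exact (mem_basicOpen_iff _).mp this (hP (Ideal.mem_map_of_mem _ ha))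
  by_contra htP
  exact Set.disjoint_left.mp ht ((mem_basicOpen_iff t).mpr htP) hwZ

lemma stalkVanishingIdeal_preimage_le_radical (f : C ⟶ X) (hZ : IsClosed Z) (y : C) :
    stalkVanishingIdeal C (f.base ⁻¹' Z) y ≤ (pullbackStalkIdeal f Z y).radical := by
  obtain ⟨U, V, hU, hV, e, hy⟩ := f.exists_isAffineOpen_le_preimage y
  rw [stalkVanishingIdeal_eq_map_germ hV hy, pullbackStalkIdeal_eq_map_germ_appLE f hU e hy]
  exact (Ideal.map_mono (sectionsVanishingOn_preimage_le_radical f hZ hU hV e)).trans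
    (Ideal.map_radical_le _)

end Pullback

section Uniform

open Filter Topology

variable {C X : Scheme.{u}}

lemma eventually_radical_pow_le_pullbackStalkIdeal [IsLocallyNoetherian C] (f : C ⟶ X)
    (Z : Set X) (y : C) :
    ∀ᶠ p : ℕ × C in atTop ×ˢ 𝓝 y,
      (pullbackStalkIdeal f Z p.2).radical ^ p.1 ≤ pullbackStalkIdeal f Z p.2 := by
  obtain ⟨U, V, hU, hV, e, hy⟩ := f.exists_isAffineOpen_le_preimage y
  have := IsLocallyNoetherian.component_noetherian ⟨V, hV⟩
  obtain ⟨m, hm⟩ := Ideal.exists_radical_pow_le_of_fg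
    ((sectionsVanishingOn X U Z).map (f.appLE U V e).hom) (IsNoetherian.noetherian _)
  filter_upwards [prod_mem_prod (Ici_mem_atTop m) (V.isOpen.mem_nhds hy)]
  rintro ⟨m', y'⟩ ⟨hm' : m ≤ m', hy' : y' ∈ V⟩
  let := C.presheaf.algebra_section_stalk (⟨y', hy'⟩ : V)
  have := hV.isLocalization_stalk ⟨y', hy'⟩
  rw [pullbackStalkIdeal_eq_map_germ_appLE f hU e hy']
  exact (Ideal.pow_le_pow_right hm').trans (Ideal.radical_map_pow_le_of_isLocalization
    (hV.primeIdealOf ⟨y', hy'⟩).asIdeal.primeCompl hm)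

lemma exists_radical_pow_le_pullbackStalkIdeal [IsLocallyNoetherian C] [CompactSpace C]
    (f : C ⟶ X) (Z : Set X) :
    ∃ m, 0 < m ∧ ∀ y, (pullbackStalkIdeal f Z y).radical ^ m ≤ pullbackStalkIdeal f Z y :=
  ((eventually_gt_atTop 0).and (CompactSpace.eventually_forall_of_forall_eventually_prod
    (eventually_radical_pow_le_pullbackStalkIdeal f Z))).exists

lemma ramDeg_spec [IsLocallyNoetherian C] [CompactSpace C] (f : C ⟶ X) (Z : Set X) :
    0 < ramDeg f Z ∧
      ∀ y, (pullbackStalkIdeal f Z y).radical ^ ramDeg f Z ≤ pullbackStalkIdeal f Z y :=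
  Nat.sInf_mem (exists_radical_pow_le_pullbackStalkIdeal f Z)

end Uniform

def SectionsPullBackToPowers (q : ℕ) {X Y : Scheme.{u}} (f : X ⟶ Y) : Prop :=
  ∀ (U : Y.Opens) (V : X.Opens) (e : V ≤ f ⁻¹ᵁ U) (s : Γ(Y, U)),
    ∃ t : Γ(X, V), f.appLE U V e s = t ^ q

namespace SectionsPullBackToPowers

variable {X Y W : Scheme.{u}}

lemma one (f : X ⟶ Y) : SectionsPullBackToPowers 1 f :=
  fun U V e s => ⟨f.appLE U V e s, (pow_one _).symm⟩

lemma comp {a b : ℕ} {f : X ⟶ Y} {g : Y ⟶ W} (hf : SectionsPullBackToPowers a f)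
    (hg : SectionsPullBackToPowers b g) : SectionsPullBackToPowers (a * b) (f ≫ g) := by
  intro U V e s
  obtain ⟨t, ht⟩ := hg U (g ⁻¹ᵁ U) le_rfl s
  obtain ⟨t', ht'⟩ := hf (g ⁻¹ᵁ U) V e t
  refine ⟨t', ?_⟩
  rw [Scheme.Hom.comp_appLE, CommRingCat.comp_apply, Scheme.Hom.app_eq_appLE, ht, map_pow, ht',
    pow_mul]

lemma iterateHom {q : ℕ} {φ : X ⟶ X} (hφ : SectionsPullBackToPowers q φ) :
    ∀ n, SectionsPullBackToPowers (q ^ n) (iterateHom φ n)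
  | 0 => one _
  | n + 1 => by
    rw [pow_succ']
    exact hφ.comp (iterateHom hφ n)

end SectionsPullBackToPowers

lemma pullbackStalkIdeal_comp_le_pow {C X Y : Scheme.{u}} (f : C ⟶ X) {φ : X ⟶ Y} {q : ℕ}
    (hφ : SectionsPullBackToPowers q φ) (Z : Set Y) (y : C) :
    pullbackStalkIdeal (f ≫ φ) Z y ≤ stalkVanishingIdeal C ((f ≫ φ).base ⁻¹' Z) y ^ q := by
  rcases Nat.eq_zero_or_pos q with rfl | hq
  · simp
  rw [pullbackStalkIdeal, Ideal.map_le_iff_le_comap, stalkVanishingIdeal_le_iff]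
  intro U hyU s hs
  obtain ⟨t, ht⟩ := hφ U (φ ⁻¹ᵁ U) le_rfl s
  have e : (f ≫ φ) ⁻¹ᵁ U ≤ f ⁻¹ᵁ (φ ⁻¹ᵁ U) := le_rfl
  have hst : (f ≫ φ).appLE U _ le_rfl s = f.appLE _ _ e t ^ q := by
    rw [Scheme.Hom.comp_appLE, CommRingCat.comp_apply, Scheme.Hom.app_eq_appLE, ht, map_pow]
  rw [Ideal.mem_comap, (f ≫ φ).stalkMap_germ_eq_germ_appLE le_rfl hyU, hst, map_pow]
  refine Ideal.pow_mem_pow (germ_mem_stalkVanishingIdeal (X := C) (U := (f ≫ φ) ⁻¹ᵁ U) hyU ?_) q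
  rw [mem_sectionsVanishingOn_iff, ← C.basicOpen_pow _ hq, ← hst, Scheme.basicOpen_appLE]
  exact (hs.preimage (f ≫ φ).base).mono_left inf_le_right

namespace IsSchemeFrobenius

variable {q : ℕ} {X : Scheme.{u}} {f : X ⟶ X}

lemma preimage_eq (hf : IsSchemeFrobenius q f) (U : X.Opens) : f ⁻¹ᵁ U = U :=
  Opens.ext <| Set.ext fun x => by rw [Scheme.Hom.coe_preimage, Set.mem_preimage, hf.1 x]

lemma appLE_eq (hf : IsSchemeFrobenius q f) (U V : X.Opens) (e : V ≤ f ⁻¹ᵁ U) (s : Γ(X, U)) :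
    f.appLE U V e s = X.presheaf.map (homOfLE (e.trans (hf.preimage_eq U).le)).op s ^ q := by
  have e₀ : U ≤ f ⁻¹ᵁ U := (hf.preimage_eq U).ge
  rw [← f.appLE_map e₀ (homOfLE (e.trans (hf.preimage_eq U).le)).op, CommRingCat.comp_apply,
    hf.2 U s, map_pow]

lemma sectionsPullBackToPowers (hf : IsSchemeFrobenius q f) : SectionsPullBackToPowers q f :=
  fun U V e s => ⟨_, hf.appLE_eq U V e s⟩

lemma comp_eq_comp {Y : Scheme.{u}} {fX : X ⟶ X} {fY : Y ⟶ Y}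
    (hX : IsSchemeFrobenius q fX) (hY : IsSchemeFrobenius q fY) (g : X ⟶ Y) :
    fX ≫ g = g ≫ fY := by
  refine Scheme.Hom.ext_of_appLE ?_ fun U V e e' s => ?_
  · ext x
    simp [hX.1 x, hY.1 (g.base x)]
  · have hV : V ≤ g ⁻¹ᵁ U := e.trans (hX.preimage_eq (g ⁻¹ᵁ U)).le
    have lhs : (fX ≫ g).appLE U V e s = g.appLE U V hV s ^ q := by
      rw [Scheme.Hom.comp_appLE, CommRingCat.comp_apply]
      exact hX.appLE_eq (g ⁻¹ᵁ U) V e _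
    have rhs : (g ≫ fY).appLE U V e' s = g.appLE U V hV s ^ q := by
      rw [Scheme.Hom.comp_appLE, CommRingCat.comp_apply, Scheme.Hom.app_eq_appLE,
        hY.appLE_eq U _ le_rfl s, map_pow, ← CommRingCat.comp_apply]
      congr 3
      exact g.map_appLE (U := fY ⁻¹ᵁ U) e' _
    rw [lhs, rhs]

lemma eq_specMap {R : CommRingCat.{u}} {φ : Spec R ⟶ Spec R}
    (hφ : IsSchemeFrobenius q φ) {ψ : R ⟶ R} (hψ : ∀ x, ψ x = x ^ q) : φ = Spec.map ψ := by
  refine ext_of_isAffine (ConcreteCategory.hom_ext _ _ fun a => ?_)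
  apply (Scheme.ΓSpecIso R).commRingCatIsoToRingEquiv.injective
  have h := congrArg (fun m => m a) (Scheme.ΓSpecIso_naturality ψ)
  simp only [CommRingCat.comp_apply] at h
  change (Scheme.ΓSpecIso R).hom _ = (Scheme.ΓSpecIso R).hom _
  rw [h, hψ, ← map_pow]
  exact congrArg _ (hφ.2 ⊤ a)

end IsSchemeFrobenius

section AbsoluteFrobenius

variable {Fq : Type u} [Field Fq] [Fintype Fq]

noncomputable def powCardRingHom {R : Type*} [CommRing R] (h : Fq →+* R) : R →+* R :=
  letI := h.toAlgebra
  (FiniteField.frobeniusAlgHom Fq R).toRingHom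

variable {W : Scheme.{u}} (s : W ⟶ Spec (CommRingCat.of Fq))

noncomputable def algebraMapSections (U : W.Opens) : Fq →+* Γ(W, U) :=
  (s.appLE ⊤ U le_top).hom.comp (Scheme.ΓSpecIso (CommRingCat.of Fq)).inv.hom

noncomputable def absoluteFrobenius : W ⟶ W :=
  let φ : W.toPresheafedSpace ⟶ W.toPresheafedSpace :=
    { base := 𝟙 _
      c := { app := fun U => CommRingCat.ofHom (powCardRingHom (algebraMapSections s U.unop))
             naturality := fun _ _ i => by
               ext a
               exact (map_pow (W.presheaf.map i).hom a _).symm } }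
  Scheme.Hom.mk ⟨φ, fun x => ⟨fun a ha => by
    obtain ⟨U, hxU, a, rfl⟩ := W.presheaf.exists_germ_eq (x := x) a
    have hφ : φ.stalkMap x (W.presheaf.germ U x hxU a) =
        W.presheaf.germ U x hxU a ^ Fintype.card Fq := by
      have h := congrArg (fun m => m a) (PresheafedSpace.stalkMap_germ φ U x hxU)
      exact h.trans (map_pow (W.presheaf.germ U x hxU).hom a _)
    rw [hφ] at ha
    exact (isUnit_pow_iff Fintype.card_ne_zero).mp ha⟩⟩

lemma isSchemeFrobenius_absoluteFrobenius :
    IsSchemeFrobenius (Fintype.card Fq) (absoluteFrobenius s) :=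
  ⟨fun _ => rfl, fun U a => by
    change W.presheaf.map (𝟙 _) (a ^ Fintype.card Fq) = _
    rw [W.presheaf.map_id]
    rfl⟩

end AbsoluteFrobenius

lemma baseChangeEnd_sectionsPullBackToPowers {Fq F : Type u} [Field Fq] [Fintype Fq] [Field F]
    [Algebra Fq F] [Algebra.IsAlgebraic Fq F] {X₀ : Scheme.{u}}
    (sX₀ : X₀ ⟶ Spec (CommRingCat.of Fq)) {fr : X₀ ⟶ X₀}
    (hfr : IsSchemeFrobenius (Fintype.card Fq) fr) (hfr₀ : fr ≫ sX₀ = sX₀) :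
    SectionsPullBackToPowers (Fintype.card Fq)
      (baseChangeEnd sX₀ (specOfAlgebra Fq F) fr hfr₀) := by
  set S := specOfAlgebra Fq F
  let σ : CommRingCat.of F ≅ CommRingCat.of F :=
    (FiniteField.frobeniusAlgEquivOfAlgebraic Fq F).toRingEquiv.toCommRingCatIso
  have hσS : Spec.map σ.hom ≫ S = S := by
    rw [← Spec.map_comp]
    congr 1
    ext a
    exact (FiniteField.frobeniusAlgEquivOfAlgebraic Fq F).commutes a
  let τ : pullback sX₀ S ⟶ pullback sX₀ S :=
    pullback.map sX₀ S sX₀ S (𝟙 _) (Spec.map σ.hom) (𝟙 _) (by simp) (by simp [hσS])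
  let Φ := absoluteFrobenius (pullback.snd sX₀ S ≫ S)
  have hΦ := isSchemeFrobenius_absoluteFrobenius (pullback.snd sX₀ S ≫ S)
  have hFrobS : absoluteFrobenius S = Spec.map σ.hom :=
    (isSchemeFrobenius_absoluteFrobenius S).eq_specMap fun _ => rfl
  have hτ : baseChangeEnd sX₀ S fr hfr₀ ≫ τ = Φ := by
    apply pullback.hom_ext
    · rw [Category.assoc, pullback.lift_fst, Category.comp_id, baseChangeEnd, pullback.lift_fst,
        hΦ.comp_eq_comp hfr]
    · rw [Category.assoc, pullback.lift_snd, ← Category.assoc, baseChangeEnd, pullback.lift_snd,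
        Category.comp_id, hΦ.comp_eq_comp (isSchemeFrobenius_absoluteFrobenius S), hFrobS]
  rw [← Category.comp_id (baseChangeEnd sX₀ S fr hfr₀), ← IsIso.hom_inv_id τ, ← Category.assoc,
    hτ, ← mul_one (Fintype.card Fq)]
  exact hΦ.sectionsPullBackToPowers.comp (.one _)

theorem contractingNear_comp_of_sectionsPullBackToPowers {C X : Scheme.{u}}
    [IsLocallyNoetherian C] [CompactSpace C] {c₁ c₂ : C ⟶ X} {φ : X ⟶ X} {Q : ℕ}
    (hφ : SectionsPullBackToPowers Q φ) {Z : Set X} (hZ : IsClosed Z) (hQ : ramDeg c₂ Z < Q)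
    (hinv : CorrInvariant (c₁ ≫ φ) c₂ Z) : ContractingNear (c₁ ≫ φ) c₂ Z := by
  obtain ⟨hram_pos, hram⟩ := ramDeg_spec c₂ Z
  have hpreimage : c₂.base ⁻¹' Z ⊆ (c₁ ≫ φ).base ⁻¹' Z := Set.image_subset_iff.mp hinv
  have key (y : C) : pullbackStalkIdeal (c₁ ≫ φ) Z y ≤ (pullbackStalkIdeal c₂ Z y).radical ^ Q :=
    (pullbackStalkIdeal_comp_le_pow c₁ hφ Z y).trans <| Ideal.pow_right_mono
      ((stalkVanishingIdeal_antitone hpreimage y).trans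
        (stalkVanishingIdeal_preimage_le_radical c₂ hZ y)) Q
  exact ⟨fun y => Ideal.le_of_le_radical_pow (hram y) hQ.le (key y),
    ramDeg c₂ Z, hram_pos, fun y => Ideal.pow_le_pow_succ_of_le_radical_pow (hram y) hQ (key y)⟩

theorem frobenius_twist_contracting_general
    {Fq F : Type u} [Field Fq] [Fintype Fq] [Field F] [Algebra Fq F] [IsAlgClosure Fq F]
    -- the `𝔽_q`-model `X₀`, of finite type over `𝔽_q`:
    (X₀ : Scheme.{u}) (sX₀ : X₀ ⟶ Spec (CommRingCat.of Fq))
    -- the `q`-power Frobenius of the model: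
    (fr : X₀ ⟶ X₀) (hfr : IsSchemeFrobenius (Fintype.card Fq) fr) (hfr₀ : fr ≫ sX₀ = sX₀)
    -- the correspondence `c : C ⟶ X ×_F X` over `F`:
    (C : Scheme.{u}) (sC : C ⟶ Spec (CommRingCat.of F))
    [LocallyOfFiniteType sC] [QuasiCompact sC]
    (c : C ⟶ pullback (pullback.snd sX₀ (specOfAlgebra Fq F))
        (pullback.snd sX₀ (specOfAlgebra Fq F)))
    -- a closed subset `Z ⊆ X`:
    (Z : Set ↥(pullback sX₀ (specOfAlgebra Fq F) : Scheme.{u})) (hZ : IsClosed Z)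
    -- `n` is such that `q^n > ram(c₂, Z)`:
    (n : ℕ)
    (hq : Fintype.card Fq ^ n >
      ramDeg (c ≫ pullback.snd (pullback.snd sX₀ (specOfAlgebra Fq F))
        (pullback.snd sX₀ (specOfAlgebra Fq F))) Z)
    -- `Z` is `c^(n)`-invariant:
    (hinv : CorrInvariant
      ((c ≫ pullback.fst (pullback.snd sX₀ (specOfAlgebra Fq F))
          (pullback.snd sX₀ (specOfAlgebra Fq F))) ≫
        iterateHom (baseChangeEnd sX₀ (specOfAlgebra Fq F) fr hfr₀) n)
      (c ≫ pullback.snd (pullback.snd sX₀ (specOfAlgebra Fq F))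
        (pullback.snd sX₀ (specOfAlgebra Fq F))) Z) :
    -- then `c^(n)` is contracting near `Z`:
    ContractingNear
      ((c ≫ pullback.fst (pullback.snd sX₀ (specOfAlgebra Fq F))
          (pullback.snd sX₀ (specOfAlgebra Fq F))) ≫
        iterateHom (baseChangeEnd sX₀ (specOfAlgebra Fq F) fr hfr₀) n)
      (c ≫ pullback.snd (pullback.snd sX₀ (specOfAlgebra Fq F))
        (pullback.snd sX₀ (specOfAlgebra Fq F))) Z := by
  have : IsLocallyNoetherian C := LocallyOfFiniteType.isLocallyNoetherian sC
  have : CompactSpace C := QuasiCompact.compactSpace_of_compactSpace sC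
  exact contractingNear_comp_of_sectionsPullBackToPowers
    ((baseChangeEnd_sectionsPullBackToPowers sX₀ hfr hfr₀).iterateHom n) hZ hq hinv

/-- **Lemma 1.11.**  Let `F` be an algebraic closure of `𝔽_q`, let `c : C ⟶ X ×_F X` be a
correspondence over `F` with `X` defined over `𝔽_q` (so `X = X₀ ×_{Spec 𝔽_q} Spec F`), and
let `Z ⊆ X` be a closed subset.  Let `n ∈ ℕ` be such that `q^n > ram(c₂, Z)` and `Z` is
`c^(n)`-invariant, where `c^(n) = (φ_{q^n} ∘ c₁, c₂)`.  Then `c^(n)` is contracting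
near `Z`. -/
theorem frobenius_twist_contracting
    {Fq F : Type u} [Field Fq] [Fintype Fq] [Field F] [Algebra Fq F] [IsAlgClosure Fq F]
    -- the `𝔽_q`-model `X₀`, of finite type over `𝔽_q`:
    (X₀ : Scheme.{u}) (sX₀ : X₀ ⟶ Spec (CommRingCat.of Fq))
    [LocallyOfFiniteType sX₀] [QuasiCompact sX₀]
    -- the `q`-power Frobenius of the model:
    (fr : X₀ ⟶ X₀) (hfr : IsSchemeFrobenius (Fintype.card Fq) fr) (hfr₀ : fr ≫ sX₀ = sX₀)
    -- `X := X₀ ×_{Spec 𝔽_q} Spec F` is of finite type over `F`: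
    [LocallyOfFiniteType (pullback.snd sX₀ (specOfAlgebra Fq F))]
    [QuasiCompact (pullback.snd sX₀ (specOfAlgebra Fq F))]
    -- the correspondence `c : C ⟶ X ×_F X` over `F`:
    (C : Scheme.{u}) (sC : C ⟶ Spec (CommRingCat.of F))
    [LocallyOfFiniteType sC] [QuasiCompact sC]
    (c : C ⟶ pullback (pullback.snd sX₀ (specOfAlgebra Fq F))
        (pullback.snd sX₀ (specOfAlgebra Fq F)))
    -- a closed subset `Z ⊆ X`:
    (Z : Set ↥(pullback sX₀ (specOfAlgebra Fq F) : Scheme.{u})) (hZ : IsClosed Z)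
    -- `n` is such that `q^n > ram(c₂, Z)`:
    (n : ℕ)
    (hq : Fintype.card Fq ^ n >
      ramDeg (c ≫ pullback.snd (pullback.snd sX₀ (specOfAlgebra Fq F))
        (pullback.snd sX₀ (specOfAlgebra Fq F))) Z)
    -- `Z` is `c^(n)`-invariant:
    (hinv : CorrInvariant
      ((c ≫ pullback.fst (pullback.snd sX₀ (specOfAlgebra Fq F))
          (pullback.snd sX₀ (specOfAlgebra Fq F))) ≫
        iterateHom (baseChangeEnd sX₀ (specOfAlgebra Fq F) fr hfr₀) n)
      (c ≫ pullback.snd (pullback.snd sX₀ (specOfAlgebra Fq F))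
        (pullback.snd sX₀ (specOfAlgebra Fq F))) Z) :
    -- then `c^(n)` is contracting near `Z`:
    ContractingNear
      ((c ≫ pullback.fst (pullback.snd sX₀ (specOfAlgebra Fq F))
          (pullback.snd sX₀ (specOfAlgebra Fq F))) ≫
        iterateHom (baseChangeEnd sX₀ (specOfAlgebra Fq F) fr hfr₀) n)
      (c ≫ pullback.snd (pullback.snd sX₀ (specOfAlgebra Fq F))
        (pullback.snd sX₀ (specOfAlgebra Fq F))) Z :=
  frobenius_twist_contracting_general X₀ sX₀ fr hfr hfr₀ C sC c Z hZ n hq hinv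
end
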